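/- (Single-step potential inequality in the multiplicative-weights analysis, from the proof of Theorem A.1.) Let m, n ≥ 1 be integers, A ∈ ℝ^{m×n}, b ∈ ℝ^n, and β > 0. Define the potential Φ(x) := smax_β(Ax) + ⟨b, x⟩ for x ∈ ℝ^n. Then for all x, h ∈ ℝ^n: Φ(x + h) ≤ Φ(x) + (⟨p, Ah⟩ + ⟨b, h⟩) + β·‖Ah‖∞², where p ∈ ℝ^m is given by p_i := exp(β·(Ax)_i)/∑_{j=1}^m exp(β·(Ax)_j). -/

import Mathlib

/-!
Write `y = Ax`, `d = Ah` and `W = ∑ exp(β yᵢ)`. Then `∑ exp(β (y + d)ᵢ) = W · ∑ pᵢ exp(β dᵢ)`,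
where `p` is the softmax distribution of `βy`, so the increment of `smax_β` is `(1/β)` times the
cumulant generating function of `d` under `p` at `β`. Since `|dᵢ| ≤ ‖d‖∞`, Hoeffding's lemma bounds
it by `β ⟨p, d⟩ + β² ‖d‖∞² / 2`; the linear term `⟨b, ·⟩` of `Φ` is additive.
-/

/-- The smooth maximum `smax_β(x) = (1/β)·ln(∑ i, exp(β·x_i))`. -/
noncomputable def smax {m : ℕ} (β : ℝ) (x : Fin m → ℝ) : ℝ :=
  (1 / β) * Real.log (∑ i, Real.exp (β * x i))

open Real MeasureTheory ProbabilityTheory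

theorem sum_mul_exp_le_exp_of_abs_le {ι : Type*} [Fintype ι] {p d : ι → ℝ} {M : ℝ}
    (hp : ∀ i, 0 ≤ p i) (hp1 : ∑ i, p i = 1) (hd : ∀ i, |d i| ≤ M) (t : ℝ) :
    ∑ i, p i * exp (t * d i) ≤ exp (t * ∑ i, p i * d i + M ^ 2 * t ^ 2 / 2) := by
  -- Hoeffding's lemma for `d`, viewed as a random variable with law `p`.
  let _ : MeasurableSpace ι := ⊤
  have : DiscreteMeasurableSpace ι := ⟨fun _ ↦ trivial⟩
  let P : PMF ι := PMF.ofFintype (fun i ↦ ENNReal.ofReal (p i)) (by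
    rw [← ENNReal.ofReal_sum_of_nonneg fun i _ ↦ hp i, hp1, ENNReal.ofReal_one])
  have hint (f : ι → ℝ) : ∫ i, f i ∂P.toMeasure = ∑ i, p i * f i := by
    simp [P, PMF.integral_eq_sum, ENNReal.toReal_ofReal (hp _)]
  have hoeffding := (hasSubgaussianMGF_of_mem_Icc (μ := P.toMeasure) (X := d) (a := -M) (b := M)
    (Measurable.of_discrete).aemeasurable (ae_of_all _ fun i ↦ abs_le.mp (hd i))).mgf_le t
  rw [mgf, hint, hint] at hoeffding
  have hparam : (((‖M - -M‖₊ / 2) ^ 2 : NNReal) : ℝ) = M ^ 2 := by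
    simp [← two_mul]
  rw [hparam] at hoeffding
  calc ∑ i, p i * exp (t * d i)
      = exp (t * ∑ i, p i * d i) * ∑ i, p i * exp (t * (d i - ∑ i, p i * d i)) := by
        rw [Finset.mul_sum]
        refine Finset.sum_congr rfl fun i _ ↦ ?_
        rw [mul_left_comm, ← exp_add]
        ring_nf
    _ ≤ exp (t * ∑ i, p i * d i) * exp (M ^ 2 * t ^ 2 / 2) := by gcongr
    _ = _ := (exp_add _ _).symm

noncomputable def softmax {ι : Type*} [Fintype ι] (β : ℝ) (y : ι → ℝ) (i : ι) : ℝ :=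
  exp (β * y i) / ∑ j, exp (β * y j)

section Softmax

variable {ι : Type*} [Fintype ι]

theorem sum_exp_mul_pos [Nonempty ι] (β : ℝ) (y : ι → ℝ) : 0 < ∑ i, exp (β * y i) :=
  Finset.sum_pos (fun _ _ ↦ exp_pos _) Finset.univ_nonempty

theorem softmax_pos (β : ℝ) (y : ι → ℝ) (i : ι) : 0 < softmax β y i := by
  have : Nonempty ι := ⟨i⟩
  exact div_pos (exp_pos _) (sum_exp_mul_pos β y)

theorem sum_softmax [Nonempty ι] (β : ℝ) (y : ι → ℝ) : ∑ i, softmax β y i = 1 := by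
  simp only [softmax, ← Finset.sum_div]
  exact div_self (sum_exp_mul_pos β y).ne'

theorem sum_exp_mul_add [Nonempty ι] (β : ℝ) (y d : ι → ℝ) :
    ∑ i, exp (β * (y i + d i)) = (∑ i, exp (β * y i)) * ∑ i, softmax β y i * exp (β * d i) := by
  have := (sum_exp_mul_pos β y).ne'
  simp only [Finset.mul_sum, softmax, mul_add, exp_add]
  refine Finset.sum_congr rfl fun i _ ↦ ?_
  field_simp

theorem sum_softmax_mul_exp_pos [Nonempty ι] (β : ℝ) (y d : ι → ℝ) :
    0 < ∑ i, softmax β y i * exp (β * d i) :=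
  Finset.sum_pos (fun _ _ ↦ mul_pos (softmax_pos ..) (exp_pos _)) Finset.univ_nonempty

end Softmax

theorem smax_add_eq {m : ℕ} [NeZero m] (β : ℝ) (y d : Fin m → ℝ) :
    smax β (y + d) = smax β y + 1 / β * log (∑ i, softmax β y i * exp (β * d i)) := by
  rw [smax, smax, Pi.add_def, sum_exp_mul_add, log_mul, mul_add]
  · exact (sum_exp_mul_pos β y).ne'
  · exact (sum_softmax_mul_exp_pos β y d).ne'

theorem smax_add_le {m : ℕ} [NeZero m] {β : ℝ} (hβ : 0 < β) (y d : Fin m → ℝ) :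
    smax β (y + d) ≤ smax β y + ∑ i, softmax β y i * d i + β * ‖d‖ ^ 2 / 2 := by
  have hoeffding := sum_mul_exp_le_exp_of_abs_le (fun i ↦ (softmax_pos β y i).le)
    (sum_softmax β y) (fun i ↦ (Real.norm_eq_abs (d i)).symm.trans_le (norm_le_pi_norm d i)) β
  calc smax β (y + d)
      = smax β y + 1 / β * log (∑ i, softmax β y i * exp (β * d i)) := smax_add_eq β y d
    _ ≤ smax β y + 1 / β * (β * ∑ i, softmax β y i * d i + ‖d‖ ^ 2 * β ^ 2 / 2) := by
        grw [log_le_log (sum_softmax_mul_exp_pos β y d) hoeffding, log_exp]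
    _ = smax β y + ∑ i, softmax β y i * d i + β * ‖d‖ ^ 2 / 2 := by
        field_simp
        ring

theorem mw_single_step_general (m n : ℕ) (hm : 1 ≤ m)
    (A : Matrix (Fin m) (Fin n) ℝ) (b : Fin n → ℝ) (β : ℝ) (hβ : 0 < β)
    (Φ : (Fin n → ℝ) → ℝ)
    (hΦ : ∀ z, Φ z = smax β (A.mulVec z) + ∑ i, b i * z i)
    (x h : Fin n → ℝ) (p : Fin m → ℝ)
    (hp : ∀ i, p i = Real.exp (β * A.mulVec x i) / ∑ j, Real.exp (β * A.mulVec x j)) :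
    Φ (x + h) ≤ Φ x + ((∑ i, p i * A.mulVec h i) + ∑ i, b i * h i)
      + β * ‖A.mulVec h‖ ^ 2 := by
  have : NeZero m := ⟨by omega⟩
  have hp : p = softmax β (A.mulVec x) := funext hp
  have hsmax := smax_add_le hβ (A.mulVec x) (A.mulVec h)
  have hlinear : ∑ i, b i * (x + h) i = ∑ i, b i * x i + ∑ i, b i * h i := by
    simp only [Pi.add_apply, mul_add, Finset.sum_add_distrib]
  rw [hΦ, hΦ, Matrix.mulVec_add, hlinear, hp]
  linarith [mul_nonneg hβ.le (sq_nonneg ‖A.mulVec h‖)]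

/-- Single-step potential inequality in the multiplicative-weights analysis
(from the proof of Theorem A.1), where `Φ(x) = smax_β(Ax) + ⟨b, x⟩`.
The norm on `Fin m → ℝ` is the sup (ℓ∞) norm. -/
theorem mw_single_step (m n : ℕ) (hm : 1 ≤ m) (hn : 1 ≤ n)
    (A : Matrix (Fin m) (Fin n) ℝ) (b : Fin n → ℝ) (β : ℝ) (hβ : 0 < β)
    (Φ : (Fin n → ℝ) → ℝ)
    (hΦ : ∀ z, Φ z = smax β (A.mulVec z) + ∑ i, b i * z i)
    (x h : Fin n → ℝ) (p : Fin m → ℝ)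
    (hp : ∀ i, p i = Real.exp (β * A.mulVec x i) / ∑ j, Real.exp (β * A.mulVec x j)) :
    Φ (x + h) ≤ Φ x + ((∑ i, p i * A.mulVec h i) + ∑ i, b i * h i)
      + β * ‖A.mulVec h‖ ^ 2 :=
  mw_single_step_general m n hm A b β hβ Φ hΦ x h p hp
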